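/- arXiv:1701.04660 — 2 statements merged into one kernel-verified Lean document; each statement's English description precedes it below -/
import Mathlib

section
/- There is a constant C such that for all x, x' ∈ [0,1], ∫₀^∞ ∫₀¹ (G_t(x,y) − G_t(x',y))² dy dt ≤ C·|x − x'|, where G is the Dirichlet heat kernel on [0,1]. -/
/-!
Expanding in the sine basis, Parseval's identity turns the `y`-integral into
`2 ∑ₙ (sin (nπx) - sin (nπx'))² e^{-n²π²t}`, and integrating in `t` leaves
`2 ∑ₙ (sin (nπx) - sin (nπx'))² / (nπ)²`. The `n`-th term is at most
`min (|x - x'|², 4 / (nπ)²)`; using the first bound for `n ≤ 1 / |x - x'|` and the second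
for larger `n` makes the series `O(|x - x'|)`.
-/

open Real MeasureTheory intervalIntegral

/-- The Dirichlet heat kernel for `∂ₜu = (1/2)u''` on `[0,1]`. -/
noncomputable def G (t x y : ℝ) : ℝ :=
  2 * ∑' n : ℕ, Real.sin (((n : ℝ) + 1) * Real.pi * x) *
    Real.sin (((n : ℝ) + 1) * Real.pi * y) *
    Real.exp (-((n : ℝ) + 1) ^ 2 * Real.pi ^ 2 * t / 2)

open Set

lemma integral_cos_int_mul_pi_mul (k : ℤ) :
    ∫ y in (0 : ℝ)..1, cos (k * π * y) = if k = 0 then 1 else 0 := by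
  split_ifs with hk
  · simp [hk]
  · have hkπ : (k : ℝ) * π ≠ 0 := mul_ne_zero (Int.cast_ne_zero.2 hk) pi_ne_zero
    rw [integral_comp_mul_left (fun y => cos y) hkπ]
    simp [integral_cos, sin_int_mul_pi]

noncomputable def sineMode (n : ℕ) (x : ℝ) : ℝ := sin (((n : ℝ) + 1) * π * x)

lemma abs_sineMode_le_one (n : ℕ) (x : ℝ) : |sineMode n x| ≤ 1 := abs_sin_le_one _

lemma continuous_sineMode (n : ℕ) : Continuous (sineMode n) := by
  unfold sineMode; fun_prop

lemma integral_sineMode_mul_sineMode (m n : ℕ) :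
    ∫ y in (0 : ℝ)..1, sineMode m y * sineMode n y = if m = n then 1 / 2 else 0 := by
  have hprod (y : ℝ) : sineMode m y * sineMode n y =
      (cos (((m - n : ℤ) : ℝ) * π * y) - cos (((m + n + 2 : ℤ) : ℝ) * π * y)) / 2 := by
    rw [sineMode, sineMode, eq_div_iff two_ne_zero, mul_comm, ← mul_assoc, two_mul_sin_mul_sin]
    congr 2 <;> push_cast <;> ring
  have hint (k : ℤ) : IntervalIntegrable (fun y => cos (k * π * y)) volume 0 1 :=
    (by fun_prop : Continuous fun y : ℝ => cos (k * π * y)).intervalIntegrable 0 1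
  simp_rw [hprod]
  rw [intervalIntegral.integral_div, integral_sub (hint _) (hint _),
    integral_cos_int_mul_pi_mul (m - n), integral_cos_int_mul_pi_mul (m + n + 2),
    if_neg (show (m + n + 2 : ℤ) ≠ 0 by omega)]
  simp only [sub_eq_zero, Int.natCast_inj, sub_zero]
  split_ifs <;> norm_num

lemma integral_tsum_of_abs_le {ι : Type*} [Countable ι] {F : ι → ℝ → ℝ} {b : ι → ℝ} {a₀ a₁ : ℝ}
    (hF : ∀ i, Continuous (F i)) (hb : Summable b) (hFb : ∀ i y, |F i y| ≤ b i) :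
    ∫ y in a₀..a₁, ∑' i, F i y = ∑' i, ∫ y in a₀..a₁, F i y :=
  (hasSum_integral_of_dominated_convergence (fun i _ => b i)
    (fun i => (hF i).aestronglyMeasurable) (fun i => .of_forall fun y _ => hFb i y)
    (.of_forall fun _ _ => hb) intervalIntegrable_const
    (.of_forall fun y _ => (hb.of_norm_bounded fun i => hFb i y).hasSum)).tsum_eq.symm

section SineSeries

variable {c : ℕ → ℝ}

lemma abs_mul_sineMode_le (a : ℝ) (n : ℕ) (y : ℝ) : |a * sineMode n y| ≤ |a| := by
  rw [abs_mul]
  exact mul_le_of_le_one_right (abs_nonneg a) (abs_sineMode_le_one n y)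

lemma abs_tsum_mul_sineMode_le (hc : Summable c) (y : ℝ) :
    |∑' n, c n * sineMode n y| ≤ ∑' n, |c n| :=
  tsum_of_norm_bounded (f := fun n => c n * sineMode n y) hc.abs.hasSum
    fun n => abs_mul_sineMode_le (c n) n y

lemma continuous_tsum_mul_sineMode (hc : Summable c) :
    Continuous fun y => ∑' n, c n * sineMode n y :=
  continuous_tsum (fun n => (continuous_sineMode n).const_mul (c n)) hc.abs
    fun n y => abs_mul_sineMode_le (c n) n y

lemma integral_tsum_mul_sineMode_mul_sineMode (hc : Summable c) (m : ℕ) :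
    ∫ y in (0 : ℝ)..1, (∑' n, c n * sineMode n y) * sineMode m y = c m / 2 := by
  simp_rw [← tsum_mul_right, mul_assoc]
  rw [integral_tsum_of_abs_le (b := fun n => |c n|) ?cont hc.abs ?bound]
  case cont => exact fun n => by have := continuous_sineMode; fun_prop
  case bound =>
    intro n y
    rw [← mul_assoc]
    exact (abs_mul_sineMode_le _ m y).trans (abs_mul_sineMode_le _ n y)
  simp_rw [intervalIntegral.integral_const_mul, integral_sineMode_mul_sineMode]
  simp [div_eq_mul_inv]

/-- Parseval's identity for the Dirichlet sine basis of `L²(0, 1)`. -/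
lemma integral_sq_tsum_mul_sineMode (hc : Summable c) :
    ∫ y in (0 : ℝ)..1, (∑' n, c n * sineMode n y) ^ 2 = (∑' n, c n ^ 2) / 2 := by
  have hsq (y : ℝ) : (∑' n, c n * sineMode n y) ^ 2
      = ∑' m, c m * ((∑' n, c n * sineMode n y) * sineMode m y) := by
    rw [sq, ← tsum_mul_right]
    exact tsum_congr fun m => by ring
  simp_rw [hsq]
  rw [integral_tsum_of_abs_le (b := fun m => |c m| * ∑' n, |c n|) ?cont (hc.abs.mul_right _)
    ?bound]
  case cont =>
    have := continuous_sineMode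
    have := continuous_tsum_mul_sineMode hc
    fun_prop
  case bound =>
    intro m y
    rw [abs_mul]
    exact mul_le_mul_of_nonneg_left ((abs_mul_sineMode_le _ m y).trans
      (abs_tsum_mul_sineMode_le hc y)) (abs_nonneg _)
  simp_rw [intervalIntegral.integral_const_mul, integral_tsum_mul_sineMode_mul_sineMode hc,
    ← mul_div_assoc, ← sq, tsum_div_const]

end SineSeries

lemma summable_inv_succ_sq : Summable fun n : ℕ => (((n : ℝ) + 1) ^ 2)⁻¹ := by
  exact_mod_cast (summable_nat_add_iff 1).2 (Real.summable_nat_pow_inv.2 one_lt_two)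

lemma tsum_le_three_mul_of_le_sq_of_le_inv_succ_sq {q : ℕ → ℝ} {δ : ℝ} (hδ : 0 ≤ δ)
    (hq : ∀ n, 0 ≤ q n) (hqδ : ∀ n, q n ≤ δ ^ 2) (hqn : ∀ n, q n ≤ (((n : ℝ) + 1) ^ 2)⁻¹) :
    ∑' n, q n ≤ 3 * δ := by
  rcases hδ.eq_or_lt with rfl | hδ
  · simp [fun n => le_antisymm ((hqδ n).trans_eq (zero_pow two_ne_zero)) (hq n)]
  set N := ⌊δ⁻¹⌋₊
  have hNδ : N * δ ≤ 1 := (le_div_iff₀ hδ).1 (by simpa using Nat.floor_le (inv_nonneg.2 hδ.le))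
  have hδN : 2 / ((N : ℝ) + 1) ≤ 2 * δ := by
    rw [div_le_iff₀ (by positivity)]
    nlinarith [(inv_lt_iff_one_lt_mul₀ hδ).1 (Nat.lt_floor_add_one δ⁻¹)]
  have hhead : ∑ i ∈ Finset.range N, q i ≤ δ :=
    calc ∑ i ∈ Finset.range N, q i ≤ N * δ ^ 2 := by
          simpa using Finset.sum_le_sum (s := Finset.range N) fun i _ => hqδ i
      _ ≤ δ := by nlinarith
  have htail : ∑' i, q (i + N) ≤ 2 / ((N : ℝ) + 1) := by
    refine Real.tsum_le_of_sum_range_le (fun i => hq _) fun M => ?_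
    calc ∑ i ∈ Finset.range M, q (i + N)
        ≤ ∑ i ∈ Finset.range M, (((i + (N + 1) : ℕ) : ℝ) ^ 2)⁻¹ :=
          Finset.sum_le_sum fun i _ => (hqn _).trans_eq (by push_cast; ring_nf)
      _ ≤ 2 / ((N : ℝ) + 1) := by
          rw [Finset.range_eq_Ico, Finset.sum_Ico_add' (fun j : ℕ => ((j : ℝ) ^ 2)⁻¹), zero_add,
            Finset.Ico_add_one_left_eq_Ioo]
          exact sum_Ioo_inv_sq_le N _
  have hsum : Summable q := summable_inv_succ_sq.of_nonneg_of_le hq hqn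
  rw [← hsum.sum_add_tsum_nat_add N]
  linarith

lemma integral_Ioi_tsum_mul_exp_neg_mul {d a : ℕ → ℝ} (ha : ∀ n, 0 < a n)
    (hs : Summable fun n => d n / a n) :
    ∫ t in Ioi (0 : ℝ), ∑' n, d n * exp (-a n * t) = ∑' n, d n / a n := by
  have hexp (n : ℕ) : IntegrableOn (fun t => exp (-a n * t)) (Ioi 0) :=
    integrableOn_exp_mul_Ioi (neg_neg_of_pos (ha n)) 0
  have hint (b : ℝ) (n : ℕ) : ∫ t in Ioi (0 : ℝ), b * exp (-a n * t) = b / a n := by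
    rw [MeasureTheory.integral_const_mul, integral_exp_mul_Ioi (neg_neg_of_pos (ha n))]
    simp [div_eq_mul_inv]
  have hnorm (n : ℕ) : ∫ t in Ioi (0 : ℝ), ‖d n * exp (-a n * t)‖ = |d n| / a n := by
    simp_rw [norm_mul, Real.norm_eq_abs, abs_exp, hint]
  rw [← integral_tsum_of_summable_integral_norm (fun n => (hexp n).const_mul (d n))
    ((funext hnorm).symm ▸ hs.abs.congr fun n => by rw [abs_div, abs_of_pos (ha n)])]
  exact tsum_congr fun n => hint (d n) n

/-- The Dirichlet eigenvalue of `-d²/dx²` on `[0, 1]` belonging to `sineMode n`. -/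
noncomputable def sineEigenvalue (n : ℕ) : ℝ := (((n : ℝ) + 1) * π) ^ 2

lemma sineEigenvalue_pos (n : ℕ) : 0 < sineEigenvalue n := by
  unfold sineEigenvalue; positivity

lemma summable_exp_neg_sineEigenvalue_mul {s : ℝ} (hs : 0 < s) :
    Summable fun n => exp (-sineEigenvalue n * s) := by
  refine (Real.summable_exp_nat_mul_of_ge (neg_neg_of_pos (mul_pos (sq_pos_of_pos pi_pos) hs))
    (f := fun n : ℕ => ((n : ℝ) + 1) ^ 2) fun n => by nlinarith).congr fun n => ?_
  rw [sineEigenvalue]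
  ring_nf

lemma summable_exp_neg_sineEigenvalue_mul_div_two {t : ℝ} (ht : 0 < t) :
    Summable fun n => exp (-sineEigenvalue n * t / 2) := by
  simpa only [mul_div_assoc] using summable_exp_neg_sineEigenvalue_mul (half_pos ht)

lemma G_eq_tsum (t x y : ℝ) :
    G t x y = 2 * ∑' n, sineMode n x * sineMode n y * exp (-sineEigenvalue n * t / 2) := by
  simp only [G, sineMode, sineEigenvalue, mul_pow, neg_mul]

lemma abs_sineMode_sub_sineMode_le_two (n : ℕ) (x x' : ℝ) :
    |sineMode n x - sineMode n x'| ≤ 2 :=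
  (abs_sub _ _).trans (by linarith [abs_sineMode_le_one n x, abs_sineMode_le_one n x'])

lemma abs_sineMode_sub_sineMode_le (n : ℕ) (x x' : ℝ) :
    |sineMode n x - sineMode n x'| ≤ ((n : ℝ) + 1) * π * |x - x'| :=
  (abs_sin_sub_sin_le _ _).trans_eq <| by
    rw [← mul_sub, abs_mul, abs_of_pos (by positivity)]

lemma G_sub_G_eq_tsum {t : ℝ} (ht : 0 < t) (x x' y : ℝ) :
    G t x y - G t x' y = 2 * ∑' n,
      ((sineMode n x - sineMode n x') * exp (-sineEigenvalue n * t / 2)) * sineMode n y := by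
  have hs (x : ℝ) :
      Summable fun n => sineMode n x * sineMode n y * exp (-sineEigenvalue n * t / 2) := by
    refine (summable_exp_neg_sineEigenvalue_mul_div_two ht).of_norm_bounded fun n => ?_
    rw [norm_mul, norm_mul, Real.norm_of_nonneg (exp_pos _).le]
    exact mul_le_of_le_one_left (exp_pos _).le
      (mul_le_one₀ (abs_sineMode_le_one n x) (abs_nonneg _) (abs_sineMode_le_one n y))
  rw [G_eq_tsum, G_eq_tsum, ← mul_sub, ← (hs x).tsum_sub (hs x')]
  exact congrArg _ (tsum_congr fun n => by ring)

lemma integral_sq_G_sub_G {t : ℝ} (ht : 0 < t) (x x' : ℝ) :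
    ∫ y in (0 : ℝ)..1, (G t x y - G t x' y) ^ 2
      = 2 * ∑' n, (sineMode n x - sineMode n x') ^ 2 * exp (-sineEigenvalue n * t) := by
  have hc :
      Summable fun n => (sineMode n x - sineMode n x') * exp (-sineEigenvalue n * t / 2) := by
    refine ((summable_exp_neg_sineEigenvalue_mul_div_two ht).mul_left 2).of_norm_bounded
      fun n => ?_
    rw [norm_mul, Real.norm_of_nonneg (exp_pos _).le]
    exact mul_le_mul_of_nonneg_right (abs_sineMode_sub_sineMode_le_two n x x') (exp_pos _).le
  have hexp (n : ℕ) : exp (-sineEigenvalue n * t / 2) ^ 2 = exp (-sineEigenvalue n * t) := by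
    rw [sq, ← exp_add, add_halves]
  simp_rw [G_sub_G_eq_tsum ht, mul_pow, intervalIntegral.integral_const_mul,
    integral_sq_tsum_mul_sineMode hc, mul_pow, hexp]
  ring

lemma sq_sineMode_sub_div_sineEigenvalue (n : ℕ) (x x' : ℝ) :
    (sineMode n x - sineMode n x') ^ 2 / sineEigenvalue n
      = 4 / π ^ 2 * ((sineMode n x - sineMode n x') / (2 * ((n : ℝ) + 1))) ^ 2 := by
  rw [sineEigenvalue]
  field_simp
  ring

lemma sq_sineMode_sub_div_two_succ_le_inv_succ_sq (n : ℕ) (x x' : ℝ) :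
    ((sineMode n x - sineMode n x') / (2 * ((n : ℝ) + 1))) ^ 2 ≤ (((n : ℝ) + 1) ^ 2)⁻¹ := by
  rw [← inv_pow, ← sq_abs]
  gcongr
  rw [abs_div, abs_of_pos (by positivity : (0 : ℝ) < 2 * ((n : ℝ) + 1)),
    div_le_iff₀ (by positivity)]
  field_simp
  exact abs_sineMode_sub_sineMode_le_two n x x'

lemma sq_sineMode_sub_div_two_succ_le (n : ℕ) (x x' : ℝ) :
    ((sineMode n x - sineMode n x') / (2 * ((n : ℝ) + 1))) ^ 2 ≤ (π * |x - x'| / 2) ^ 2 := by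
  rw [← sq_abs]
  gcongr
  rw [abs_div, abs_of_pos (by positivity : (0 : ℝ) < 2 * ((n : ℝ) + 1)),
    div_le_iff₀ (by positivity)]
  linarith [abs_sineMode_sub_sineMode_le n x x']

lemma summable_sq_sineMode_sub_div_sineEigenvalue (x x' : ℝ) :
    Summable fun n => (sineMode n x - sineMode n x') ^ 2 / sineEigenvalue n := by
  simp_rw [sq_sineMode_sub_div_sineEigenvalue]
  exact (summable_inv_succ_sq.of_nonneg_of_le (fun n => sq_nonneg _)
    fun n => sq_sineMode_sub_div_two_succ_le_inv_succ_sq n x x').mul_left _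

lemma tsum_sq_sineMode_sub_div_sineEigenvalue_le (x x' : ℝ) :
    ∑' n, (sineMode n x - sineMode n x') ^ 2 / sineEigenvalue n ≤ 6 / π * |x - x'| := by
  simp_rw [sq_sineMode_sub_div_sineEigenvalue, tsum_mul_left]
  calc 4 / π ^ 2 * ∑' n, ((sineMode n x - sineMode n x') / (2 * ((n : ℝ) + 1))) ^ 2
      ≤ 4 / π ^ 2 * (3 * (π * |x - x'| / 2)) := by
        gcongr
        exact tsum_le_three_mul_of_le_sq_of_le_inv_succ_sq (by positivity) (fun n => sq_nonneg _)
          (fun n => sq_sineMode_sub_div_two_succ_le n x x')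
          (fun n => sq_sineMode_sub_div_two_succ_le_inv_succ_sq n x x')
    _ = 6 / π * |x - x'| := by
        field_simp
        ring

theorem integral_heatKernel_sq_diff_le :
    ∃ C : ℝ, ∀ x ∈ Set.Icc (0 : ℝ) 1, ∀ x' ∈ Set.Icc (0 : ℝ) 1,
      ∫ t in Set.Ioi (0 : ℝ), (∫ y in (0 : ℝ)..1, (G t x y - G t x' y) ^ 2)
        ≤ C * |x - x'| := by
  refine ⟨12 / π, fun x _ x' _ => ?_⟩
  calc ∫ t in Ioi (0 : ℝ), ∫ y in (0 : ℝ)..1, (G t x y - G t x' y) ^ 2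
      = ∫ t in Ioi (0 : ℝ),
          2 * ∑' n, (sineMode n x - sineMode n x') ^ 2 * exp (-sineEigenvalue n * t) :=
        setIntegral_congr_fun measurableSet_Ioi fun t ht => integral_sq_G_sub_G ht x x'
    _ = 2 * ∑' n, (sineMode n x - sineMode n x') ^ 2 / sineEigenvalue n := by
        rw [MeasureTheory.integral_const_mul, integral_Ioi_tsum_mul_exp_neg_mul sineEigenvalue_pos
          (summable_sq_sineMode_sub_div_sineEigenvalue x x')]
    _ ≤ 2 * (6 / π * |x - x'|) := by
        gcongr
        exact tsum_sq_sineMode_sub_div_sineEigenvalue_le x x'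
    _ = 12 / π * |x - x'| := by ring
end

section
/- There is a constant C such that for all x, x' ∈ [0,1], ∫₀^∞ ∫₀¹ |G_t(x,y) − G_t(x',y)| dy dt ≤ C·|x−x'|·log(max(e, 1/|x−x'|)), where G is the Dirichlet heat kernel on [0,1]. -/
open Real MeasureTheory intervalIntegral

/-!
Write `h = |x - x'|` and `k = n + 1`. Since `|sin a - sin b| ≤ min 2 |a - b|`, the `k`-th modes of
`G_t(x,y)` and `G_t(x',y)` differ by at most `2 min(2, kπh) e^{-k²π²t/2}`, uniformly in `y`. Integrating
in `t` mode by mode (Tonelli) leaves a series with terms `≤ 2 min(h/k, 1/k²)`. Split it at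
`k ≈ 1/h`: the head is `h` times a harmonic sum, `≲ h log(1/h)`, and the tail telescopes to `≲ h`.
-/

theorem one_div_add_one_sq_le_sub {a : ℝ} (ha : 0 < a) :
    1 / (a + 1) ^ 2 ≤ 1 / a - 1 / (a + 1) := by
  have : 1 / a - 1 / (a + 1) = 1 / (a * (a + 1)) := by field_simp; ring
  rw [this]
  exact one_div_le_one_div_of_le (by positivity) (by nlinarith)

theorem sum_range_min_inv_le {h : ℝ} (hh : 0 ≤ h) {N : ℕ} (hN : N ≠ 0) (n : ℕ) :
    ∑ m ∈ Finset.range n, min (h / (m + 1)) (1 / ((m : ℝ) + 1) ^ 2) ≤ h * harmonic N + 1 / N := by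
  set f : ℕ → ℝ := fun m ↦ min (h / (m + 1)) (1 / ((m : ℝ) + 1) ^ 2)
  have hN_pos : (0 : ℝ) < N := by positivity
  calc ∑ m ∈ Finset.range n, f m ≤ ∑ m ∈ Finset.range (N + n), f m :=
        Finset.sum_le_sum_of_subset_of_nonneg (Finset.range_subset_range.2 (by omega))
          fun _ _ _ ↦ by positivity
    _ = ∑ m ∈ Finset.range N, f m + ∑ k ∈ Finset.range n, f (N + k) := Finset.sum_range_add ..
    _ ≤ ∑ m ∈ Finset.range N, h / (m + 1)
          + ∑ k ∈ Finset.range n, (1 / ((N : ℝ) + k) - 1 / ((N : ℝ) + (k + 1 : ℕ))) := by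
        gcongr with m _ k _
        · exact min_le_left _ _
        · refine (min_le_right _ _).trans ?_
          push_cast
          rw [← add_assoc]
          exact one_div_add_one_sq_le_sub (by positivity)
    _ = h * harmonic N + (1 / N - 1 / (N + n)) := by
        rw [Finset.sum_range_sub' (fun k : ℕ ↦ 1 / ((N : ℝ) + k)), harmonic]
        push_cast
        simp [Finset.mul_sum, div_eq_mul_inv]
    _ ≤ h * harmonic N + 1 / N := by
        have : 0 ≤ 1 / ((N : ℝ) + n) := by positivity
        linarith

theorem summable_min_inv {h : ℝ} (hh : 0 ≤ h) :
    Summable fun m : ℕ ↦ min (h / (m + 1)) (1 / ((m : ℝ) + 1) ^ 2) :=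
  summable_of_sum_range_le (fun _ ↦ by positivity) (sum_range_min_inv_le hh one_ne_zero)

theorem tsum_min_inv_le {h : ℝ} (hh : 0 ≤ h) :
    ∑' m : ℕ, min (h / (m + 1)) (1 / ((m : ℝ) + 1) ^ 2)
      ≤ 4 * h * log (max (exp 1) (1 / h)) := by
  rcases hh.eq_or_lt with rfl | hpos
  · have (m : ℕ) : min (0 : ℝ) (((m : ℝ) + 1) ^ 2)⁻¹ = 0 := min_eq_left (by positivity)
    simp [this]
  set M := max (exp 1) (1 / h)
  have hL : 1 ≤ log M := by
    rw [← log_exp 1]; exact log_le_log (exp_pos 1) (le_max_left _ _)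
  set N := ⌊1 / h⌋₊ + 1
  have hN_gt : 1 / h < N := by simpa [N] using Nat.lt_floor_add_one (1 / h)
  have hN_le : (N : ℝ) ≤ 2 * M := by
    have : (1 : ℝ) ≤ M := (one_le_exp zero_le_one).trans (le_max_left _ _)
    have : 1 / h ≤ M := le_max_right _ _
    have : (⌊1 / h⌋₊ : ℝ) ≤ 1 / h := Nat.floor_le (by positivity)
    push_cast [N]; linarith
  have hlogN : log N ≤ 1 + log M := by
    calc log N ≤ log (2 * M) := log_le_log (by positivity) hN_le
      _ = log 2 + log M := log_mul two_ne_zero (by positivity)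
      _ ≤ 1 + log M := by linarith [log_two_lt_d9]
  have hinvN : 1 / (N : ℝ) ≤ h := by
    rw [div_le_iff₀ (by positivity)]; rw [div_lt_iff₀ hpos] at hN_gt; linarith
  calc _ ≤ h * harmonic N + 1 / N :=
        Real.tsum_le_of_sum_range_le (fun _ ↦ by positivity)
          (sum_range_min_inv_le hh (by positivity))
    _ ≤ h * (1 + log N) + h := by gcongr; exact harmonic_le_one_add_log N
    _ ≤ 4 * h * log M := by nlinarith

theorem ENNReal.ofReal_tsum_le_tsum_ofReal {ι : Type*} {f : ι → ℝ} (hf : ∀ i, 0 ≤ f i) :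
    ENNReal.ofReal (∑' i, f i) ≤ ∑' i, ENNReal.ofReal (f i) := by
  by_cases hs : Summable f
  · exact (ENNReal.ofReal_tsum_of_nonneg hf hs).le
  · simp [tsum_eq_zero_of_not_summable hs]

theorem integral_le_tsum_integral_of_le_tsum {α ι : Type*} [MeasurableSpace α] [Countable ι]
    {μ : Measure α} {f : α → ℝ} {F : ι → α → ℝ} (hF_nonneg : ∀ i a, 0 ≤ F i a)
    (hF_int : ∀ i, Integrable (F i) μ) (hF_sum : Summable fun i ↦ ∫ a, F i a ∂μ)
    (hf_nonneg : 0 ≤ᵐ[μ] f) (hf_le : ∀ᵐ a ∂μ, f a ≤ ∑' i, F i a) :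
    ∫ a, f a ∂μ ≤ ∑' i, ∫ a, F i a ∂μ := by
  have hint_nonneg (i : ι) : 0 ≤ ∫ a, F i a ∂μ := integral_nonneg (hF_nonneg i)
  by_cases hf : Integrable f μ
  swap
  · rw [integral_undef hf]; exact tsum_nonneg hint_nonneg
  rw [integral_eq_lintegral_of_nonneg_ae hf_nonneg hf.1]
  refine ENNReal.toReal_le_of_le_ofReal (tsum_nonneg hint_nonneg) ?_
  calc ∫⁻ a, ENNReal.ofReal (f a) ∂μ ≤ ∫⁻ a, ∑' i, ENNReal.ofReal (F i a) ∂μ :=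
        lintegral_mono_ae <| hf_le.mono fun a ha ↦
          (ENNReal.ofReal_le_ofReal ha).trans (ENNReal.ofReal_tsum_le_tsum_ofReal (hF_nonneg · a))
    _ = ∑' i, ∫⁻ a, ENNReal.ofReal (F i a) ∂μ :=
        lintegral_tsum fun i ↦ (hF_int i).aemeasurable.ennreal_ofReal
    _ = ∑' i, ENNReal.ofReal (∫ a, F i a ∂μ) := by
        refine tsum_congr fun i ↦ ?_
        exact (ofReal_integral_eq_lintegral_ofReal (hF_int i) (.of_forall (hF_nonneg i))).symm
    _ = ENNReal.ofReal (∑' i, ∫ a, F i a ∂μ) :=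
        (ENNReal.ofReal_tsum_of_nonneg hint_nonneg hF_sum).symm

theorem abs_sin_sub_sin_le_min (a b : ℝ) : |sin a - sin b| ≤ min 2 |a - b| := by
  refine le_min ?_ (abs_sin_sub_sin_le a b)
  calc |sin a - sin b| ≤ |sin a| + |sin b| := abs_sub _ _
    _ ≤ 2 := by linarith [abs_sin_le_one a, abs_sin_le_one b]

noncomputable def modeDecay (n : ℕ) (t : ℝ) : ℝ := exp (-((n : ℝ) + 1) ^ 2 * π ^ 2 * t / 2)

theorem summable_modeDecay {t : ℝ} (ht : 0 < t) : Summable (modeDecay · t) := by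
  refine (summable_exp_nat_mul_of_ge (c := -(π ^ 2 * t / 2)) (by simp; positivity)
    (f := fun n ↦ ((n : ℝ) + 1) ^ 2) fun n ↦ by nlinarith).congr fun n ↦ ?_
  simp only [modeDecay]; ring_nf

theorem modeDecay_eq_exp_mul (n : ℕ) (t : ℝ) :
    modeDecay n t = exp (-(((n : ℝ) + 1) ^ 2 * π ^ 2 / 2) * t) := by
  rw [modeDecay]; ring_nf

theorem modeDecay_nonneg (n : ℕ) (t : ℝ) : 0 ≤ modeDecay n t := exp_nonneg _

theorem neg_modeRate_neg (n : ℕ) : -(((n : ℝ) + 1) ^ 2 * π ^ 2 / 2) < 0 := by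
  simp only [Left.neg_neg_iff]; positivity

theorem integrableOn_modeDecay (n : ℕ) : IntegrableOn (modeDecay n) (Set.Ioi 0) := by
  rw [funext (modeDecay_eq_exp_mul n)]
  exact integrableOn_exp_mul_Ioi (neg_modeRate_neg n) 0

theorem integral_modeDecay (n : ℕ) :
    ∫ t in Set.Ioi 0, modeDecay n t = 2 / (((n : ℝ) + 1) ^ 2 * π ^ 2) := by
  simp only [modeDecay_eq_exp_mul, integral_exp_mul_Ioi (neg_modeRate_neg n), mul_zero, exp_zero]
  field_simp

theorem abs_tsum_sub_tsum_le {ι : Type*} {a b c : ι → ℝ} (ha : Summable a) (hb : Summable b)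
    (hc : Summable c) (h : ∀ i, |a i - b i| ≤ c i) : |∑' i, a i - ∑' i, b i| ≤ ∑' i, c i := by
  rw [← ha.tsum_sub hb]
  exact tsum_of_norm_bounded (f := fun i ↦ a i - b i) hc.hasSum h

theorem abs_sin_mul_sin_mul_le (a b : ℝ) {c : ℝ} (hc : 0 ≤ c) : |sin a * sin b * c| ≤ c := by
  rw [abs_mul, abs_mul, abs_of_nonneg hc]
  exact mul_le_of_le_one_left hc (mul_le_one₀ (abs_sin_le_one a) (abs_nonneg _) (abs_sin_le_one b))

theorem abs_sin_mul_sub_sin_mul_le (a a' b : ℝ) {c : ℝ} (hc : 0 ≤ c) :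
    |sin a * sin b * c - sin a' * sin b * c| ≤ min 2 |a - a'| * c := by
  rw [← sub_mul, ← sub_mul, abs_mul, abs_mul, abs_of_nonneg hc]
  refine mul_le_mul_of_nonneg_right ?_ hc
  calc |sin a - sin a'| * |sin b| ≤ |sin a - sin a'| :=
        mul_le_of_le_one_right (abs_nonneg _) (abs_sin_le_one b)
    _ ≤ min 2 |a - a'| := abs_sin_sub_sin_le_min a a'

noncomputable def modeDiffBound (h : ℝ) (n : ℕ) (t : ℝ) : ℝ :=
  2 * min 2 (((n : ℝ) + 1) * π * h) * modeDecay n t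

theorem modeDiffBound_nonneg {h : ℝ} (hh : 0 ≤ h) (n : ℕ) (t : ℝ) : 0 ≤ modeDiffBound h n t := by
  have := modeDecay_nonneg n t
  unfold modeDiffBound; positivity

theorem abs_G_sub_le {t : ℝ} (ht : 0 < t) (x x' y : ℝ) :
    |G t x y - G t x' y| ≤ ∑' n, modeDiffBound |x - x'| n t := by
  set s : ℝ → ℕ → ℝ := fun z n ↦
    sin (((n : ℝ) + 1) * π * z) * sin (((n : ℝ) + 1) * π * y) * modeDecay n t
  have hs_sum (z : ℝ) : Summable (s z) := .of_norm_bounded (summable_modeDecay ht)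
    fun n ↦ abs_sin_mul_sin_mul_le _ _ (modeDecay_nonneg n t)
  have hdiff (n : ℕ) :
      |s x n - s x' n| ≤ min 2 (((n : ℝ) + 1) * π * |x - x'|) * modeDecay n t := by
    have := abs_sin_mul_sub_sin_mul_le (((n : ℝ) + 1) * π * x) (((n : ℝ) + 1) * π * x')
      (((n : ℝ) + 1) * π * y) (modeDecay_nonneg n t)
    rwa [← mul_sub, abs_mul, abs_of_pos (by positivity : (0 : ℝ) < ((n : ℝ) + 1) * π)] at this
  have hbound_sum :
      Summable fun n : ℕ ↦ min 2 (((n : ℝ) + 1) * π * |x - x'|) * modeDecay n t :=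
    ((summable_modeDecay ht).mul_left 2).of_nonneg_of_le
      (fun n ↦ mul_nonneg (le_min zero_le_two (by positivity)) (modeDecay_nonneg n t))
      fun n ↦ mul_le_mul_of_nonneg_right (min_le_left _ _) (modeDecay_nonneg n t)
  calc |G t x y - G t x' y| = 2 * |∑' n, s x n - ∑' n, s x' n| := by
        rw [← abs_two, ← abs_mul, mul_sub]; rfl
    _ ≤ 2 * ∑' n : ℕ, min 2 (((n : ℝ) + 1) * π * |x - x'|) * modeDecay n t := by
        gcongr; exact abs_tsum_sub_tsum_le (hs_sum x) (hs_sum x') hbound_sum hdiff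
    _ = ∑' n, modeDiffBound |x - x'| n t := by
        rw [← tsum_mul_left]; simp only [modeDiffBound, mul_assoc]

theorem integral_modeDiffBound_le {h : ℝ} (hh : 0 ≤ h) (n : ℕ) :
    ∫ t in Set.Ioi 0, modeDiffBound h n t
      ≤ 2 * min (h / (n + 1)) (1 / ((n : ℝ) + 1) ^ 2) := by
  have hk : (0 : ℝ) < n + 1 := by positivity
  have hπ := pi_gt_three
  simp only [modeDiffBound]
  rw [MeasureTheory.integral_const_mul, integral_modeDecay, mul_assoc]
  gcongr 2 * ?_
  refine le_min ?_ ?_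
  · calc _ ≤ ((n : ℝ) + 1) * π * h * (2 / (((n : ℝ) + 1) ^ 2 * π ^ 2)) := by
          gcongr; exact min_le_right _ _
      _ = 2 / π * (h / (n + 1)) := by field_simp
      _ ≤ h / (n + 1) := mul_le_of_le_one_left (by positivity) (by rw [div_le_one₀ pi_pos]; linarith)
  · calc _ ≤ 2 * (2 / (((n : ℝ) + 1) ^ 2 * π ^ 2)) := by gcongr; exact min_le_left _ _
      _ = 4 / π ^ 2 * (1 / ((n : ℝ) + 1) ^ 2) := by field_simp; ring
      _ ≤ 1 / ((n : ℝ) + 1) ^ 2 :=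
          mul_le_of_le_one_left (by positivity) (by rw [div_le_one₀ (by positivity)]; nlinarith)

theorem integral_abs_G_sub_le {t : ℝ} (ht : 0 < t) (x x' : ℝ) :
    ∫ y in (0 : ℝ)..1, |G t x y - G t x' y| ≤ ∑' n, modeDiffBound |x - x'| n t := by
  have := norm_integral_le_of_norm_le_const (a := 0) (b := 1) fun y _ ↦
    (norm_abs_eq_norm (G t x y - G t x' y)).trans_le (abs_G_sub_le ht x x' y)
  simpa using (le_abs_self _).trans this

theorem integrableOn_modeDiffBound (h : ℝ) (n : ℕ) :
    IntegrableOn (modeDiffBound h n) (Set.Ioi 0) :=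
  (integrableOn_modeDecay n).const_mul _

theorem summable_integral_modeDiffBound {h : ℝ} (hh : 0 ≤ h) :
    Summable fun n ↦ ∫ t in Set.Ioi 0, modeDiffBound h n t :=
  ((summable_min_inv hh).mul_left 2).of_nonneg_of_le
    (fun n ↦ setIntegral_nonneg measurableSet_Ioi fun t _ ↦ modeDiffBound_nonneg hh n t)
    (integral_modeDiffBound_le hh)

theorem integral_heatKernel_abs_diff_le :
    ∃ C : ℝ, ∀ x ∈ Set.Icc (0 : ℝ) 1, ∀ x' ∈ Set.Icc (0 : ℝ) 1,
      ∫ t in Set.Ioi (0 : ℝ), (∫ y in (0 : ℝ)..1, |G t x y - G t x' y|)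
        ≤ C * |x - x'| * Real.log (max (Real.exp 1) (1 / |x - x'|)) := by
  refine ⟨8, fun x _ x' _ ↦ ?_⟩
  have hh : 0 ≤ |x - x'| := abs_nonneg _
  calc ∫ t in Set.Ioi 0, (∫ y in (0 : ℝ)..1, |G t x y - G t x' y|)
      ≤ ∑' n, ∫ t in Set.Ioi 0, modeDiffBound |x - x'| n t :=
        integral_le_tsum_integral_of_le_tsum (fun n t ↦ modeDiffBound_nonneg hh n t)
          (integrableOn_modeDiffBound _) (summable_integral_modeDiffBound hh)
          (.of_forall fun t ↦ intervalIntegral.integral_nonneg zero_le_one fun y _ ↦ abs_nonneg _)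
          ((ae_restrict_iff' measurableSet_Ioi).2 (.of_forall fun t ht ↦
            integral_abs_G_sub_le ht x x'))
    _ ≤ ∑' n : ℕ, 2 * min (|x - x'| / (n + 1)) (1 / ((n : ℝ) + 1) ^ 2) :=
        (summable_integral_modeDiffBound hh).tsum_le_tsum (integral_modeDiffBound_le hh)
          ((summable_min_inv hh).mul_left 2)
    _ ≤ 2 * (4 * |x - x'| * log (max (exp 1) (1 / |x - x'|))) := by
        rw [tsum_mul_left]; gcongr; exact tsum_min_inv_le hh
    _ = 8 * |x - x'| * log (max (exp 1) (1 / |x - x'|)) := by ring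
end
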